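/- Let B be the unweighted backward shift on l^∞(ℕ) and let λ ∈ ℂ with |λ| > 2. Then the operator I+λB is locally topologically mixing, i.e. there exists a nonzero vector x ∈ l^∞(ℕ) with J_{I+λB}^mix(x) = l^∞(ℕ). -/

import Mathlib

/-!
Write `T = I + λB`. For `|λ| ≥ 1` the sequence `x k = (-1/λ)^k` is a nonzero bounded vector with
`T x = 0`. For `|λ| > 1` solving `w k + λ w (k+1) = z k` with `w 0 = 0` gives a right inverse `R`
of `T` with `‖R z‖ ≤ ‖z‖ / (|λ| - 1)`, which is a strict contraction once `|λ| > 2`. Hence for any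
`y` the vectors `x + Rⁿ y` tend to `x`, while `Tⁿ (x + Rⁿ y) = y` for `n ≥ 1`.
-/

open Filter Topology
open scoped ENNReal

/-- The unweighted backward shift on `l^∞(ℕ)`, the space of bounded sequences of
complex numbers with the supremum norm. -/
noncomputable def backwardShift : lp (fun _ : ℕ => ℂ) ∞ →L[ℂ] lp (fun _ : ℕ => ℂ) ∞ :=
  LinearMap.mkContinuous
    { toFun := fun x => ⟨fun n => x (n + 1), memℓp_infty ⟨‖x‖, by
        rintro r ⟨n, rfl⟩
        exact lp.norm_apply_le_norm ENNReal.top_ne_zero x (n + 1)⟩⟩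
      map_add' := fun x y => by ext n; exact congrFun rfl n
      map_smul' := fun c x => by ext n; rfl }
    1
    (fun x => by
      rw [one_mul]
      apply lp.norm_le_of_forall_le (norm_nonneg x)
      intro n
      exact lp.norm_apply_le_norm ENNReal.top_ne_zero x (n + 1))

/-- The extended mixing limit set `J_T^mix(x)`: all `y` for which there exists a
sequence `(x_n)` with `x_n → x` and `T^n x_n → y`. -/
noncomputable def Jmix {X : Type*} [SeminormedAddCommGroup X] [NormedSpace ℂ X]
    (T : X →L[ℂ] X) (x : X) : Set X :=
  {y | ∃ u : ℕ → X, Tendsto u atTop (𝓝 x) ∧ Tendsto (fun n => (T ^ n) (u n)) atTop (𝓝 y)}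

section Jmix

variable {X : Type*} [SeminormedAddCommGroup X] [NormedSpace ℂ X] (T : X →L[ℂ] X)

theorem Jmix_zero_subset_of_apply_eq_zero {x : X} (hx : T x = 0) : Jmix T 0 ⊆ Jmix T x := by
  rintro y ⟨u, hu, hTu⟩
  refine ⟨fun n => x + u n, by simpa using tendsto_const_nhds.add hu, hTu.congr' ?_⟩
  filter_upwards [eventually_ge_atTop 1] with n hn
  obtain ⟨m, rfl⟩ := Nat.exists_eq_add_of_le' hn
  simp only [map_add, pow_succ, mul_apply_eq_comp, hx, map_zero, zero_add]

theorem mem_Jmix_zero_of_leftInverse {R : X → X} (hR : Function.LeftInverse T R) {y : X}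
    (hy : Tendsto (fun n => R^[n] y) atTop (𝓝 0)) : y ∈ Jmix T 0 :=
  ⟨fun n => R^[n] y, hy, tendsto_const_nhds.congr fun n =>
    ((pow_apply_eq_iterate T n _).trans (hR.iterate n y)).symm⟩

end Jmix

theorem tendsto_iterate_nhds_zero_of_norm_le {E : Type*} [SeminormedAddCommGroup E] {R : E → E}
    {c : ℝ} (hc₀ : 0 ≤ c) (hc₁ : c < 1) (hR : ∀ y, ‖R y‖ ≤ c * ‖y‖) (y : E) :
    Tendsto (fun n => R^[n] y) atTop (𝓝 0) := by
  have hbound : ∀ n, ‖R^[n] y‖ ≤ c ^ n * ‖y‖ := by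
    intro n
    induction n with
    | zero => simp
    | succ n ih =>
      calc ‖R^[n + 1] y‖ = ‖R (R^[n] y)‖ := by rw [Function.iterate_succ_apply']
        _ ≤ c * (c ^ n * ‖y‖) := (hR _).trans (mul_le_mul_of_nonneg_left ih hc₀)
        _ = c ^ (n + 1) * ‖y‖ := by ring
  refine squeeze_zero_norm hbound ?_
  simpa using (tendsto_pow_atTop_nhds_zero_of_lt_one hc₀ hc₁).mul_const ‖y‖

local notation "ℓ∞" => lp (fun _ : ℕ => ℂ) ∞

theorem one_add_smul_backwardShift_apply (lam : ℂ) (x : ℓ∞) (k : ℕ) :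
    (1 + lam • backwardShift : ℓ∞ →L[ℂ] ℓ∞) x k = x k + lam * x (k + 1) :=
  rfl

theorem exists_ne_zero_one_add_smul_backwardShift_apply_eq_zero {lam : ℂ} (hlam : 1 ≤ ‖lam‖) :
    ∃ x : ℓ∞, x ≠ 0 ∧ (1 + lam • backwardShift : ℓ∞ →L[ℂ] ℓ∞) x = 0 := by
  have hlam₀ : lam ≠ 0 := norm_pos_iff.mp (by linarith)
  have hr : ‖-lam⁻¹‖ ≤ 1 := by rw [norm_neg, norm_inv]; exact inv_le_one_of_one_le₀ hlam
  let x : ℓ∞ := ⟨fun k => (-lam⁻¹) ^ k, memℓp_infty ⟨1, by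
    rintro _ ⟨k, rfl⟩
    simpa [norm_pow] using pow_le_one₀ (norm_nonneg _) hr⟩⟩
  refine ⟨x, fun h => by simpa [x] using congrArg (· 0) h, lp.ext (funext fun k => ?_)⟩
  rw [one_add_smul_backwardShift_apply, lp.coeFn_zero, Pi.zero_apply]
  simp only [x, pow_succ]
  field_simp
  ring

/-- The solution `w` of `(I + λB) w = z` normalized by `w 0 = 0`. -/
noncomputable def preimageSeq (lam : ℂ) (z : ℕ → ℂ) : ℕ → ℂ
  | 0 => 0
  | k + 1 => (z k - preimageSeq lam z k) / lam

theorem preimageSeq_add_mul_succ {lam : ℂ} (hlam : lam ≠ 0) (z : ℕ → ℂ) (k : ℕ) :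
    preimageSeq lam z k + lam * preimageSeq lam z (k + 1) = z k := by
  rw [preimageSeq, mul_div_cancel₀ _ hlam, add_sub_cancel]

theorem norm_preimageSeq_le {lam : ℂ} (hlam : 1 < ‖lam‖) {z : ℕ → ℂ} {M : ℝ}
    (hz : ∀ k, ‖z k‖ ≤ M) (k : ℕ) : ‖preimageSeq lam z k‖ ≤ M / (‖lam‖ - 1) := by
  have hM : 0 ≤ M := (norm_nonneg _).trans (hz 0)
  have hpos : 0 < ‖lam‖ - 1 := by linarith
  induction k with
  | zero => simpa [preimageSeq] using div_nonneg hM hpos.le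
  | succ k ih =>
    calc ‖preimageSeq lam z (k + 1)‖ = ‖z k - preimageSeq lam z k‖ / ‖lam‖ := by
          rw [preimageSeq, norm_div]
      _ ≤ (M + M / (‖lam‖ - 1)) / ‖lam‖ := by
          gcongr
          exact (norm_sub_le _ _).trans (add_le_add (hz k) ih)
      _ = M / (‖lam‖ - 1) := by
          field_simp
          ring

theorem exists_leftInverse_one_add_smul_backwardShift {lam : ℂ} (hlam : 1 < ‖lam‖) :
    ∃ R : ℓ∞ → ℓ∞,
      Function.LeftInverse ⇑(1 + lam • backwardShift : ℓ∞ →L[ℂ] ℓ∞) R ∧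
        ∀ z, ‖R z‖ ≤ (‖lam‖ - 1)⁻¹ * ‖z‖ := by
  have hlam₀ : lam ≠ 0 := norm_pos_iff.mp (by linarith)
  have hbound (z : ℓ∞) (k : ℕ) :
      ‖preimageSeq lam z k‖ ≤ (‖lam‖ - 1)⁻¹ * ‖z‖ := by
    rw [inv_mul_eq_div]
    exact norm_preimageSeq_le hlam (lp.norm_apply_le_norm ENNReal.top_ne_zero z) k
  refine ⟨fun z => ⟨preimageSeq lam z, memℓp_infty ⟨_, Set.forall_mem_range.mpr (hbound z)⟩⟩,
    fun z => lp.ext (funext fun k => (one_add_smul_backwardShift_apply _ _ k).trans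
      (preimageSeq_add_mul_succ hlam₀ z k)), fun z => ?_⟩
  have hpos : 0 < ‖lam‖ - 1 := by linarith
  exact lp.norm_le_of_forall_le (by positivity) (hbound z)

/-- If `|λ| > 2`, then `I + λB` is locally topologically mixing on `l^∞(ℕ)`: there is a
nonzero vector `x` with `J_{I+λB}^mix(x) = l^∞(ℕ)`. -/
theorem stmt1 (lam : ℂ) (hlam : 2 < ‖lam‖) :
    ∃ x : lp (fun _ : ℕ => ℂ) ∞, x ≠ 0 ∧
      Jmix (1 + lam • backwardShift) x = Set.univ := by
  obtain ⟨x, hx₀, hx⟩ :=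
    exists_ne_zero_one_add_smul_backwardShift_apply_eq_zero (lam := lam) (by linarith)
  obtain ⟨R, hR, hR_norm⟩ := exists_leftInverse_one_add_smul_backwardShift (lam := lam) (by linarith)
  have hc₀ : 0 ≤ (‖lam‖ - 1)⁻¹ := inv_nonneg.mpr (by linarith)
  have hc₁ : (‖lam‖ - 1)⁻¹ < 1 := inv_lt_one_of_one_lt₀ (by linarith)
  refine ⟨x, hx₀, Set.eq_univ_of_forall fun y => ?_⟩
  exact Jmix_zero_subset_of_apply_eq_zero _ hx <| mem_Jmix_zero_of_leftInverse _ hR <|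
    tendsto_iterate_nhds_zero_of_norm_le hc₀ hc₁ hR_norm y
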